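/- arXiv:2506.20239 — 4 statements merged into one kernel-verified Lean document; each statement's English description precedes it below -/
import Mathlib

section
/- For any f ∈ L^∞(E,μ) ∩ L^1(E,μ) and any h₁, h₂ > 0, one has | |f|_{h₁} − |f|_{h₂} | ≤ |f|_{h₁ ∧ h₂} · |h₁ − h₂| / (h₁ ∨ h₂). -/
open MeasureTheory

/-!
For `0 < h ≤ h'` every quotient `a / (m + h)` with `a, m ≥ 0` satisfies
`(h / h') · a / (m + h) ≤ a / (m + h') ≤ a / (m + h)`. Taking suprema,
`(h / h') |f|_h ≤ |f|_{h'} ≤ |f|_h`, hence `0 ≤ |f|_h - |f|_{h'} ≤ |f|_h (h' - h) / h'`.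
-/

/-- The semi-norm `|f|_h = sup_{C ∈ 𝒞} |∫_C f dμ| / (μ(C) + h)`. -/
noncomputable def normH {E : Type*} [MeasurableSpace E] (μ : Measure E)
    (𝒞 : Set (Set E)) (f : E → ℝ) (h : ℝ) : ℝ :=
  ⨆ C : 𝒞, |∫ x in (C : Set E), f x ∂μ| / ((μ (C : Set E)).toReal + h)

section SupDivAdd

lemma div_add_le_div_add_of_le {a m h h' : ℝ} (ha : 0 ≤ a) (hm : 0 ≤ m) (hh : 0 < h)
    (hle : h ≤ h') :
    a / (m + h') ≤ a / (m + h) :=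
  div_le_div_of_nonneg_left ha (by positivity) (by linarith)

lemma mul_div_add_le_div_add {a m h h' : ℝ} (ha : 0 ≤ a) (hm : 0 ≤ m) (hh : 0 < h)
    (hle : h ≤ h') :
    h / h' * (a / (m + h)) ≤ a / (m + h') := by
  have hh' : 0 < h' := hh.trans_le hle
  rw [div_mul_div_comm, div_le_div_iff₀ (by positivity) (by positivity)]
  nlinarith [mul_nonneg ha hm]

variable {ι : Type*} (a m : ι → ℝ) {h h' : ℝ}

lemma bddAbove_div_add_of_le (ha : ∀ i, 0 ≤ a i) (hm : ∀ i, 0 ≤ m i) (hh : 0 < h)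
    (hle : h ≤ h') (hb : BddAbove (Set.range fun i => a i / (m i + h))) :
    BddAbove (Set.range fun i => a i / (m i + h')) := by
  obtain ⟨B, hB⟩ := hb
  refine ⟨B, ?_⟩
  rintro _ ⟨i, rfl⟩
  exact (div_add_le_div_add_of_le (ha i) (hm i) hh hle).trans (hB ⟨i, rfl⟩)

lemma iSup_div_add_antitone (ha : ∀ i, 0 ≤ a i) (hm : ∀ i, 0 ≤ m i) (hh : 0 < h)
    (hle : h ≤ h') (hb : BddAbove (Set.range fun i => a i / (m i + h))) :
    ⨆ i, a i / (m i + h') ≤ ⨆ i, a i / (m i + h) :=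
  Real.iSup_le (fun i => (div_add_le_div_add_of_le (ha i) (hm i) hh hle).trans (le_ciSup hb i))
    (Real.iSup_nonneg fun i => div_nonneg (ha i) (by linarith [hm i]))

lemma mul_iSup_div_add_le (ha : ∀ i, 0 ≤ a i) (hm : ∀ i, 0 ≤ m i) (hh : 0 < h)
    (hle : h ≤ h') (hb : BddAbove (Set.range fun i => a i / (m i + h))) :
    h / h' * ⨆ i, a i / (m i + h) ≤ ⨆ i, a i / (m i + h') := by
  have hb' := bddAbove_div_add_of_le a m ha hm hh hle hb
  rw [Real.mul_iSup_of_nonneg (div_nonneg hh.le (hh.le.trans hle))]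
  exact Real.iSup_le
    (fun i => (mul_div_add_le_div_add (ha i) (hm i) hh hle).trans (le_ciSup hb' i))
    (Real.iSup_nonneg fun i => div_nonneg (ha i) (by linarith [hm i, hh.trans_le hle]))

lemma abs_iSup_div_add_sub_le (ha : ∀ i, 0 ≤ a i) (hm : ∀ i, 0 ≤ m i) (hh : 0 < h)
    (hle : h ≤ h') (hb : BddAbove (Set.range fun i => a i / (m i + h))) :
    |(⨆ i, a i / (m i + h)) - ⨆ i, a i / (m i + h')| ≤
      (⨆ i, a i / (m i + h)) * (h' - h) / h' := by
  have hh' : 0 < h' := hh.trans_le hle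
  have hanti := iSup_div_add_antitone a m ha hm hh hle hb
  have hscale := mul_iSup_div_add_le a m ha hm hh hle hb
  set S := ⨆ i, a i / (m i + h)
  have hS : S * (h' - h) / h' = S - h / h' * S := by field_simp
  rw [abs_of_nonneg (sub_nonneg.2 hanti), hS]
  linarith

end SupDivAdd

section normH

variable {E : Type*} [MeasurableSpace E]

lemma normH_bddAbove {μ : Measure E} (𝒞 : Set (Set E)) {f : E → ℝ} {h : ℝ} (hh : 0 < h)
    (hf : Integrable f μ) :
    BddAbove (Set.range fun C : 𝒞 =>
      |∫ x in (C : Set E), f x ∂μ| / ((μ (C : Set E)).toReal + h)) := by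
  refine ⟨(∫ x, |f x| ∂μ) / h, ?_⟩
  rintro _ ⟨C, rfl⟩
  have hint : |∫ x in (C : Set E), f x ∂μ| ≤ ∫ x, |f x| ∂μ :=
    (abs_integral_le_integral_abs).trans
      (setIntegral_le_integral hf.abs (.of_forall fun x => abs_nonneg _))
  exact div_le_div₀ ((abs_nonneg _).trans hint) hint hh
    (le_add_of_nonneg_left ENNReal.toReal_nonneg)

lemma abs_normH_sub_le_of_le (μ : Measure E) (𝒞 : Set (Set E)) {f : E → ℝ} {h h' : ℝ}
    (hh : 0 < h) (hle : h ≤ h') (hf : Integrable f μ) :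
    |normH μ 𝒞 f h - normH μ 𝒞 f h'| ≤ normH μ 𝒞 f h * (h' - h) / h' :=
  abs_iSup_div_add_sub_le _ _ (fun _ => abs_nonneg _) (fun _ => ENNReal.toReal_nonneg) hh hle
    (normH_bddAbove 𝒞 hh hf)

end normH

theorem normH_lipschitz_in_h_general {E : Type*} [MeasurableSpace E] (μ : Measure E)
    (𝒞 : Set (Set E)) (f : E → ℝ) (h₁ h₂ : ℝ)
    (hh₁ : 0 < h₁) (hh₂ : 0 < h₂)
    (hf1 : Integrable f μ) :
    |normH μ 𝒞 f h₁ - normH μ 𝒞 f h₂| ≤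
      normH μ 𝒞 f (min h₁ h₂) * |h₁ - h₂| / max h₁ h₂ := by
  rcases le_total h₁ h₂ with H | H
  · rw [min_eq_left H, max_eq_right H, abs_sub_comm h₁, abs_of_nonneg (sub_nonneg.2 H)]
    exact abs_normH_sub_le_of_le μ 𝒞 hh₁ H hf1
  · rw [min_eq_right H, max_eq_left H, abs_of_nonneg (sub_nonneg.2 H), abs_sub_comm]
    exact abs_normH_sub_le_of_le μ 𝒞 hh₂ H hf1

theorem normH_lipschitz_in_h {E : Type*} [MeasurableSpace E] (μ : Measure E)
    [SigmaFinite μ] (𝒞 : Set (Set E)) (f : E → ℝ) (h₁ h₂ : ℝ)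
    (hh₁ : 0 < h₁) (hh₂ : 0 < h₂)
    (hf1 : Integrable f μ) (hfi : MemLp f ⊤ μ)
    (h𝒞 : ∀ C ∈ 𝒞, μ C < ⊤) :
    |normH μ 𝒞 f h₁ - normH μ 𝒞 f h₂| ≤
      normH μ 𝒞 f (min h₁ h₂) * |h₁ - h₂| / max h₁ h₂ :=
  normH_lipschitz_in_h_general μ 𝒞 f h₁ h₂ hh₁ hh₂ hf1
end

section
/- For any model m and any h₁, h₂ > 0, |κ_m(h₁) − κ_m(h₂)| ≤ (1 − (h₁ ∧ h₂)/(h₁ ∨ h₂)) · κ_m(h₁ ∧ h₂); in particular κ_m is continuous on (0,∞). -/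
open MeasureTheory

/-- `κ_m(h) = inf_{p,q ∈ m, ‖p-q‖_∞ > 0} |p-q|_h / ‖p-q‖_∞`. -/
noncomputable def kappa {E : Type*} [MeasurableSpace E] (μ : Measure E)
    (𝒞 : Set (Set E)) (m : Set (E → ℝ)) (h : ℝ) : ℝ :=
  sInf {x : ℝ | ∃ p ∈ m, ∃ q ∈ m, 0 < (eLpNorm (p - q) ⊤ μ).toReal ∧
    x = normH μ 𝒞 (p - q) h / (eLpNorm (p - q) ⊤ μ).toReal}

/-!
Each term `A / (t + h)` (with `A, t ≥ 0`) of the supremum defining `|f|_h` decreases in `h`,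
while `h * A / (t + h)` increases. Both properties survive suprema, division by the positive
constant `‖p - q‖_∞` and infima, so `κ_m` is antitone on `(0, ∞)` and `h ↦ h κ_m(h)` is monotone
there. For `a ≤ b` this squeezes `κ_m(b)` between `(a / b) κ_m(a)` and `κ_m(a)`, which is the
claimed bound; it makes `κ_m` Lipschitz on every `[c, ∞)` with `c > 0`, hence continuous.
-/

open Set

section ScaleMonotone

variable {g : ℝ → ℝ}

theorem sub_mem_Icc_of_antitoneOn_of_monotoneOn_mul (hanti : AntitoneOn g (Ioi 0))
    (hmul : MonotoneOn (fun h => h * g h) (Ioi 0)) {a b : ℝ} (ha : 0 < a) (hab : a ≤ b) :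
    g a - g b ∈ Icc 0 ((1 - a / b) * g a) := by
  have hb : 0 < b := ha.trans_le hab
  refine ⟨sub_nonneg.2 (hanti ha hb hab), ?_⟩
  have hscaled : a / b * g a ≤ g b := by
    rw [div_mul_eq_mul_div, div_le_iff₀ hb, mul_comm (g b)]
    exact hmul ha hb hab
  linarith

theorem abs_sub_le_of_antitoneOn_of_monotoneOn_mul (hanti : AntitoneOn g (Ioi 0))
    (hmul : MonotoneOn (fun h => h * g h) (Ioi 0)) {a b : ℝ} (ha : 0 < a) (hb : 0 < b) :
    |g a - g b| ≤ (1 - min a b / max a b) * g (min a b) := by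
  wlog hab : a ≤ b generalizing a b
  · rw [abs_sub_comm, min_comm, max_comm]
    exact this hb ha (le_of_not_ge hab)
  obtain ⟨hnonneg, hle⟩ := sub_mem_Icc_of_antitoneOn_of_monotoneOn_mul hanti hmul ha hab
  rw [min_eq_left hab, max_eq_right hab, abs_of_nonneg hnonneg]
  exact hle

theorem lipschitzOnWith_of_antitoneOn_of_monotoneOn_mul (hg : ∀ h ∈ Ioi 0, 0 ≤ g h)
    (hanti : AntitoneOn g (Ioi 0)) (hmul : MonotoneOn (fun h => h * g h) (Ioi 0))
    {c : ℝ} (hc : 0 < c) : LipschitzOnWith (g c / c).toNNReal g (Ici c) := by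
  refine LipschitzOnWith.of_dist_le_mul fun a ha b hb => ?_
  rw [Real.coe_toNNReal _ (div_nonneg (hg c hc) hc.le), Real.dist_eq, Real.dist_eq]
  wlog hab : a ≤ b generalizing a b
  · rw [abs_sub_comm, abs_sub_comm a]
    exact this b hb a ha (le_of_not_ge hab)
  have ha0 : 0 < a := hc.trans_le ha
  have hb0 : 0 < b := ha0.trans_le hab
  obtain ⟨hnonneg, hle⟩ := sub_mem_Icc_of_antitoneOn_of_monotoneOn_mul hanti hmul ha0 hab
  rw [abs_of_nonneg hnonneg, abs_sub_comm, abs_of_nonneg (sub_nonneg.2 hab)]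
  calc g a - g b ≤ (1 - a / b) * g a := hle
    _ = (b - a) * (g a / b) := by field_simp
    _ ≤ (b - a) * (g c / c) := mul_le_mul_of_nonneg_left
        (div_le_div₀ (hg c hc) (hanti hc ha0 ha) hc hb) (sub_nonneg.2 hab)
    _ = g c / c * (b - a) := mul_comm _ _

theorem continuousOn_of_antitoneOn_of_monotoneOn_mul (hg : ∀ h ∈ Ioi 0, 0 ≤ g h)
    (hanti : AntitoneOn g (Ioi 0)) (hmul : MonotoneOn (fun h => h * g h) (Ioi 0)) :
    ContinuousOn g (Ioi 0) := fun _ hb =>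
  ((lipschitzOnWith_of_antitoneOn_of_monotoneOn_mul hg hanti hmul
    (half_pos hb)).continuousOn.continuousAt
      (Ici_mem_nhds (half_lt_self hb))).continuousWithinAt

end ScaleMonotone

theorem Real.iSup_le_iSup_of_le_mul {ι : Sort*} {u v : ι → ℝ} {c : ℝ} (hc : 0 ≤ c)
    (huv : ∀ i, u i ≤ v i) (hvu : ∀ i, v i ≤ c * u i) : ⨆ i, u i ≤ ⨆ i, v i := by
  by_cases hv : BddAbove (range v)
  · exact ciSup_mono hv huv
  · -- the real supremum is `0` off bounded families, and `v ≤ c u` makes `u` unbounded too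
    have hu : ¬BddAbove (range u) := fun ⟨M, hM⟩ =>
      hv ⟨c * M, forall_mem_range.2 fun i =>
        (hvu i).trans (mul_le_mul_of_nonneg_left (hM (mem_range_self i)) hc)⟩
    rw [Real.iSup_of_not_bddAbove hu, Real.iSup_of_not_bddAbove hv]

section Families

variable {ι : Sort*} {g : ι → ℝ → ℝ}

theorem antitoneOn_iSup_of_monotoneOn_mul (hanti : ∀ i, AntitoneOn (g i) (Ioi 0))
    (hmul : ∀ i, MonotoneOn (fun h => h * g i h) (Ioi 0)) :
    AntitoneOn (fun h => ⨆ i, g i h) (Ioi 0) := by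
  intro a (ha : 0 < a) b (hb : 0 < b) hab
  refine Real.iSup_le_iSup_of_le_mul (c := b / a) (by positivity) (fun i => hanti i ha hb hab)
    fun i => ?_
  rw [div_mul_eq_mul_div, le_div_iff₀ ha, mul_comm]
  exact hmul i ha hb hab

theorem monotoneOn_mul_iSup (hanti : ∀ i, AntitoneOn (g i) (Ioi 0))
    (hmul : ∀ i, MonotoneOn (fun h => h * g i h) (Ioi 0)) :
    MonotoneOn (fun h => h * ⨆ i, g i h) (Ioi 0) := by
  intro a (ha : 0 < a) b (hb : 0 < b) hab
  simp only [Real.mul_iSup_of_nonneg ha.le, Real.mul_iSup_of_nonneg hb.le]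
  refine Real.iSup_le_iSup_of_le_mul (c := b / a) (by positivity) (fun i => hmul i ha hb hab)
    fun i => ?_
  rw [← mul_assoc, div_mul_cancel₀ b ha.ne']
  exact mul_le_mul_of_nonneg_left (hanti i ha hb hab) hb.le

theorem antitoneOn_iInf (hg : ∀ i, ∀ h ∈ Ioi 0, 0 ≤ g i h)
    (hanti : ∀ i, AntitoneOn (g i) (Ioi 0)) :
    AntitoneOn (fun h => ⨅ i, g i h) (Ioi 0) := fun _ ha _ hb hab =>
  ciInf_mono ⟨0, forall_mem_range.2 fun i => hg i _ hb⟩ fun i => hanti i ha hb hab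

theorem monotoneOn_mul_iInf (hg : ∀ i, ∀ h ∈ Ioi 0, 0 ≤ g i h)
    (hmul : ∀ i, MonotoneOn (fun h => h * g i h) (Ioi 0)) :
    MonotoneOn (fun h => h * ⨅ i, g i h) (Ioi 0) := by
  intro a (ha : 0 < a) b (hb : 0 < b) hab
  simp only [Real.mul_iInf_of_nonneg ha.le, Real.mul_iInf_of_nonneg hb.le]
  exact ciInf_mono ⟨0, forall_mem_range.2 fun i => mul_nonneg ha.le (hg i a ha)⟩
    fun i => hmul i ha hb hab

end Families

theorem antitoneOn_div_add {A t : ℝ} (hA : 0 ≤ A) (ht : 0 ≤ t) :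
    AntitoneOn (fun h => A / (t + h)) (Ioi 0) := fun a (ha : 0 < a) _ _ hab =>
  div_le_div_of_nonneg_left hA (by positivity) (by linarith)

theorem monotoneOn_mul_div_add {A t : ℝ} (hA : 0 ≤ A) (ht : 0 ≤ t) :
    MonotoneOn (fun h => h * (A / (t + h))) (Ioi 0) := by
  intro a (ha : 0 < a) b (hb : 0 < b) hab
  simp only [mul_div_assoc']
  rw [div_le_div_iff₀ (by positivity) (by positivity)]
  nlinarith [mul_nonneg (mul_nonneg hA ht) (sub_nonneg.2 hab)]

section Kappa

variable {E : Type*} [MeasurableSpace E] (μ : Measure E) (𝒞 : Set (Set E))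

theorem normH_nonneg (f : E → ℝ) {h : ℝ} (hh : 0 < h) : 0 ≤ normH μ 𝒞 f h :=
  Real.iSup_nonneg fun _ => div_nonneg (abs_nonneg _) (by positivity)

theorem normH_antitoneOn (f : E → ℝ) : AntitoneOn (normH μ 𝒞 f) (Ioi 0) :=
  antitoneOn_iSup_of_monotoneOn_mul
    (fun _ => antitoneOn_div_add (abs_nonneg _) ENNReal.toReal_nonneg)
    (fun _ => monotoneOn_mul_div_add (abs_nonneg _) ENNReal.toReal_nonneg)

theorem normH_mul_monotoneOn (f : E → ℝ) :
    MonotoneOn (fun h => h * normH μ 𝒞 f h) (Ioi 0) :=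
  monotoneOn_mul_iSup
    (fun _ => antitoneOn_div_add (abs_nonneg _) ENNReal.toReal_nonneg)
    (fun _ => monotoneOn_mul_div_add (abs_nonneg _) ENNReal.toReal_nonneg)

variable (m : Set (E → ℝ))

theorem kappa_eq_iInf (h : ℝ) :
    kappa μ 𝒞 m h = ⨅ f : {f : E → ℝ // (∃ p ∈ m, ∃ q ∈ m, f = p - q) ∧
      0 < (eLpNorm f ⊤ μ).toReal}, normH μ 𝒞 f h / (eLpNorm (f : E → ℝ) ⊤ μ).toReal := by
  refine congrArg sInf (Set.ext fun x => ⟨?_, ?_⟩)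
  · rintro ⟨p, hp, q, hq, hpos, rfl⟩
    exact ⟨⟨p - q, ⟨p, hp, q, hq, rfl⟩, hpos⟩, rfl⟩
  · rintro ⟨⟨_, ⟨p, hp, q, hq, rfl⟩, hpos⟩, rfl⟩
    exact ⟨p, hp, q, hq, hpos, rfl⟩

theorem kappa_nonneg {h : ℝ} (hh : 0 < h) : 0 ≤ kappa μ 𝒞 m h := by
  rw [kappa_eq_iInf]
  exact Real.iInf_nonneg fun f => div_nonneg (normH_nonneg μ 𝒞 _ hh) f.2.2.le

theorem kappa_antitoneOn : AntitoneOn (kappa μ 𝒞 m) (Ioi 0) := by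
  rw [funext (kappa_eq_iInf μ 𝒞 m)]
  refine antitoneOn_iInf (fun f _ hh => div_nonneg (normH_nonneg μ 𝒞 _ hh) f.2.2.le)
    fun f _ ha _ hb hab => ?_
  exact div_le_div_of_nonneg_right (normH_antitoneOn μ 𝒞 f ha hb hab) f.2.2.le

theorem kappa_mul_monotoneOn : MonotoneOn (fun h => h * kappa μ 𝒞 m h) (Ioi 0) := by
  simp only [kappa_eq_iInf]
  refine monotoneOn_mul_iInf (fun f _ hh => div_nonneg (normH_nonneg μ 𝒞 _ hh) f.2.2.le)
    fun f _ ha _ hb hab => ?_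
  simp only [mul_div_assoc']
  exact div_le_div_of_nonneg_right (normH_mul_monotoneOn μ 𝒞 f ha hb hab) f.2.2.le

end Kappa

theorem kappa_lipschitz_and_continuous_general {E : Type*} [MeasurableSpace E] (μ : Measure E)
    (𝒞 : Set (Set E)) (m : Set (E → ℝ)) :
    (∀ h₁ h₂ : ℝ, 0 < h₁ → 0 < h₂ →
      |kappa μ 𝒞 m h₁ - kappa μ 𝒞 m h₂| ≤
        (1 - min h₁ h₂ / max h₁ h₂) * kappa μ 𝒞 m (min h₁ h₂)) ∧
    ContinuousOn (kappa μ 𝒞 m) (Set.Ioi (0 : ℝ)) :=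
  ⟨fun _ _ => abs_sub_le_of_antitoneOn_of_monotoneOn_mul (kappa_antitoneOn μ 𝒞 m)
      (kappa_mul_monotoneOn μ 𝒞 m),
    continuousOn_of_antitoneOn_of_monotoneOn_mul (fun _ => kappa_nonneg μ 𝒞 m)
      (kappa_antitoneOn μ 𝒞 m) (kappa_mul_monotoneOn μ 𝒞 m)⟩

theorem kappa_lipschitz_and_continuous {E : Type*} [MeasurableSpace E] (μ : Measure E)
    [SigmaFinite μ] (𝒞 : Set (Set E)) (m : Set (E → ℝ))
    (hm : ∀ f ∈ m, Integrable f μ ∧ MemLp f ⊤ μ)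
    (h𝒞 : ∀ C ∈ 𝒞, μ C < ⊤) :
    (∀ h₁ h₂ : ℝ, 0 < h₁ → 0 < h₂ →
      |kappa μ 𝒞 m h₁ - kappa μ 𝒞 m h₂| ≤
        (1 - min h₁ h₂ / max h₁ h₂) * kappa μ 𝒞 m (min h₁ h₂)) ∧
    ContinuousOn (kappa μ 𝒞 m) (Set.Ioi (0 : ℝ)) :=
  kappa_lipschitz_and_continuous_general μ 𝒞 m
end

section
/- For any ε ∈ [0,1), h > 0, model m, and any p̄ ∈ m: if the hun-estimator p̂ ∈ m satisfies T_m(X, p̂) ≤ inf_{p∈m} T_m(X,p) + δ, where T_m(X,p) = sup_{q∈m} T(X,p,q) and |T(X,p,q) − Δ(p,q)| ≤ Z for all p,q ∈ m, and where |p−p*|_h ≥ Δ(p,q) ≥ (1−ε)|p−q|_h − |q−p*|_h for all p,q ∈ m, then (1−ε)|p̄ − p̂|_h ≤ 2|p* − p̄|_h + 2Z + δ. -/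
/-!
The test of `p̂` against `p̄` is squeezed from both sides. From below, the lower bound on `Δ` and
the deviation bound give `T(p̂, p̄) ≥ (1 - ε)|p̄ - p̂| - |p̄ - p*| - Z`. From above,
`T(p̂, p̄) ≤ T_m(p̂) ≤ T_m(p̄) + δ`, and every test `T(p̄, q)` is at most `|p̄ - p*| + Z`
by the upper bound on `Δ`, hence so is `T_m(p̄)`.
-/

section Supremum

variable {ι : Type*} {s : Set ι} {f : ι → ℝ} {B : ℝ}

theorem le_iSup_subtype_of_forall_le {i : ι} (hi : i ∈ s) (hB : ∀ j ∈ s, f j ≤ B) :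
    f i ≤ ⨆ j : s, f j :=
  le_ciSup (f := fun j : s => f j) ⟨B, by rintro _ ⟨j, rfl⟩; exact hB j j.2⟩ ⟨i, hi⟩

theorem iSup_subtype_le_of_forall_le (hs : s.Nonempty) (hB : ∀ j ∈ s, f j ≤ B) :
    ⨆ j : s, f j ≤ B :=
  haveI := hs.to_subtype
  ciSup_le fun j => hB j j.2

end Supremum

theorem hun_estimator_basic_oracle_general {V : Type*} [AddCommGroup V]
    (m : Set V)
    (Nh : V → ℝ) (hNh_symm : ∀ v, Nh (-v) = Nh v)
    (pstar : V) (ε : ℝ)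
    (T Δ : V → V → ℝ) (Z : ℝ) (δ : ℝ)
    -- uniform deviation bound between the random tests and their means
    (hdev : ∀ p ∈ m, ∀ q ∈ m, |T p q - Δ p q| ≤ Z)
    -- upper and lower bounds on the mean tests
    (hΔub : ∀ p ∈ m, ∀ q ∈ m, Δ p q ≤ Nh (p - pstar))
    (hΔlb : ∀ p ∈ m, ∀ q ∈ m, (1 - ε) * Nh (p - q) - Nh (q - pstar) ≤ Δ p q)
    (Tm : V → ℝ) (hTm : Tm = fun p => ⨆ q : m, T p (q : V))
    (phat : V) (hphat : phat ∈ m)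
    -- `phat` is a `δ`-minimizer of `Tm` over `m`
    (hmin : ∀ p ∈ m, Tm phat ≤ Tm p + δ) :
    ∀ pbar ∈ m, (1 - ε) * Nh (pbar - phat) ≤ 2 * Nh (pstar - pbar) + 2 * Z + δ := by
  intro pbar hpbar
  subst hTm
  have hNh_comm : ∀ v w, Nh (v - w) = Nh (w - v) := fun v w => by rw [← neg_sub, hNh_symm]
  have htest_le : ∀ p ∈ m, ∀ q ∈ m, T p q ≤ Nh (p - pstar) + Z := fun p hp q hq => by
    linarith [(abs_le.mp (hdev p hp q hq)).2, hΔub p hp q hq]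
  have htest_ge : (1 - ε) * Nh (phat - pbar) - Nh (pbar - pstar) - Z ≤ T phat pbar := by
    linarith [(abs_le.mp (hdev phat hphat pbar hpbar)).1, hΔlb phat hphat pbar hpbar]
  have hhat : T phat pbar ≤ ⨆ q : m, T phat q :=
    le_iSup_subtype_of_forall_le hpbar (htest_le phat hphat)
  have hbar : ⨆ q : m, T pbar q ≤ Nh (pbar - pstar) + Z :=
    iSup_subtype_le_of_forall_le ⟨pbar, hpbar⟩ (htest_le pbar hpbar)
  rw [hNh_comm pbar phat, hNh_comm pstar pbar]
  linarith [hmin pbar hpbar]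

theorem hun_estimator_basic_oracle {V : Type*} [AddCommGroup V]
    (m : Set V) (hmc : m.Countable) (hmne : m.Nonempty)
    (Nh : V → ℝ) (hNh_nonneg : ∀ v, 0 ≤ Nh v) (hNh_symm : ∀ v, Nh (-v) = Nh v)
    (pstar : V) (ε : ℝ) (hε0 : 0 ≤ ε) (hε1 : ε < 1)
    (T Δ : V → V → ℝ) (Z : ℝ) (hZ : 0 ≤ Z) (δ : ℝ) (hδ : 0 < δ)
    -- uniform deviation bound between the random tests and their means
    (hdev : ∀ p ∈ m, ∀ q ∈ m, |T p q - Δ p q| ≤ Z)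
    -- upper and lower bounds on the mean tests
    (hΔub : ∀ p ∈ m, ∀ q ∈ m, Δ p q ≤ Nh (p - pstar))
    (hΔlb : ∀ p ∈ m, ∀ q ∈ m, (1 - ε) * Nh (p - q) - Nh (q - pstar) ≤ Δ p q)
    (Tm : V → ℝ) (hTm : Tm = fun p => ⨆ q : m, T p (q : V))
    (phat : V) (hphat : phat ∈ m)
    -- `phat` is a `δ`-minimizer of `Tm` over `m`
    (hmin : ∀ p ∈ m, Tm phat ≤ Tm p + δ) :
    ∀ pbar ∈ m, (1 - ε) * Nh (pbar - phat) ≤ 2 * Nh (pstar - pbar) + 2 * Z + δ :=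
  hun_estimator_basic_oracle_general m Nh hNh_symm pstar ε T Δ Z δ hdev hΔub hΔlb Tm hTm phat hphat
    hmin
end

section
/- The dimension of the space of d-variate polynomials of total degree at most r satisfies binom(r+d, d) ≥ min(e^{r/2}, 4^d/(2d+1)). -/
/-!
If `r ≤ d`, then `C(r+d, d) ≥ C(2r, r) ≥ 2^r ≥ e^{r/2}`; if `d ≤ r`, then
`C(r+d, d) ≥ C(2d, d) ≥ 4^d / (2d+1)`, because `C(2d, d)` is the largest of the
`2d+1` binomial coefficients `C(2d, k)`, which sum to `4^d`.
-/

namespace Nat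

theorem four_pow_le_two_mul_add_one_mul_centralBinom (n : ℕ) :
    4 ^ n ≤ (2 * n + 1) * centralBinom n :=
  calc 4 ^ n = ∑ k ∈ Finset.range (2 * n + 1), (2 * n).choose k := by
        rw [sum_range_choose, pow_mul]; norm_num
    _ ≤ ∑ _k ∈ Finset.range (2 * n + 1), centralBinom n :=
        Finset.sum_le_sum fun k _ => choose_le_centralBinom k n
    _ = (2 * n + 1) * centralBinom n := by simp

theorem two_pow_le_centralBinom (n : ℕ) : 2 ^ n ≤ centralBinom n := by
  induction n with
  | zero => simp
  | succ n ih =>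
    have h : (n + 1) * (2 * centralBinom n) ≤ (n + 1) * centralBinom (n + 1) := by
      rw [succ_mul_centralBinom_succ]
      nlinarith
    calc 2 ^ (n + 1) = 2 * 2 ^ n := Nat.pow_succ'
      _ ≤ 2 * centralBinom n := Nat.mul_le_mul_left 2 ih
      _ ≤ centralBinom (n + 1) := Nat.le_of_mul_le_mul_left h n.succ_pos

theorem centralBinom_min_le_choose_add (n m : ℕ) :
    centralBinom (min n m) ≤ (n + m).choose m := by
  rcases le_total n m with h | h
  · rw [min_eq_left h, centralBinom_eq_two_mul_choose, ← choose_symm_add]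
    exact choose_le_choose n (by omega)
  · rw [min_eq_right h, centralBinom_eq_two_mul_choose]
    exact choose_le_choose m (by omega)

end Nat

theorem Real.exp_half_le_two_pow (n : ℕ) : Real.exp (n / 2) ≤ 2 ^ n :=
  calc Real.exp (n / 2) ≤ Real.exp (n * Real.log 2) :=
        Real.exp_le_exp.2 (by nlinarith [Real.log_two_gt_d9, (n.cast_nonneg : (0 : ℝ) ≤ n)])
    _ = 2 ^ n := by rw [Real.exp_nat_mul, Real.exp_log two_pos]

theorem choose_ge_min_exp_pow_general (r d : ℕ) :
    min (Real.exp (r / 2)) (4 ^ d / (2 * d + 1)) ≤ ((r + d).choose d : ℝ) := by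
  rcases le_total r d with h | h
  · calc _ ≤ Real.exp (r / 2) := min_le_left _ _
      _ ≤ 2 ^ r := Real.exp_half_le_two_pow r
      _ ≤ (r.centralBinom : ℝ) := by exact_mod_cast Nat.two_pow_le_centralBinom r
      _ ≤ ((r + d).choose d : ℝ) := by
        exact_mod_cast min_eq_left h ▸ Nat.centralBinom_min_le_choose_add r d
  · calc _ ≤ (4 : ℝ) ^ d / (2 * d + 1) := min_le_right _ _
      _ ≤ (d.centralBinom : ℝ) := by
        rw [div_le_iff₀ (by positivity), mul_comm]
        exact_mod_cast Nat.four_pow_le_two_mul_add_one_mul_centralBinom d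
      _ ≤ ((r + d).choose d : ℝ) := by
        exact_mod_cast min_eq_right h ▸ Nat.centralBinom_min_le_choose_add r d

theorem choose_ge_min_exp_pow (r d : ℕ) (hr : 0 < r) (hd : 0 < d) :
    min (Real.exp (r / 2)) (4 ^ d / (2 * d + 1)) ≤ ((r + d).choose d : ℝ) :=
  choose_ge_min_exp_pow_general r d
end
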